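/- Under the hypotheses of the strong Lyapunov property (same setting as the previous lemma), any C¹ solution Z(t) of Z' = 𝓖(Z) with Z(0) = Z₀ satisfies ½‖Z(t) − Z*‖² + C₁ ∫₀ᵗ ⟨M(Z(r)), Z(r) − Z*⟩ dr + C₂ ∫₀ᵗ ‖Q(Z(r) − Z*)‖² dr ≤ ½‖Z₀ − Z*‖² for all t > 0, where C₁ = (4 − η₁ − 2θη₂)/4 and C₂ = s(2 − sL)(η₁ − 2η₂)/4. -/

import Mathlib

open scoped InnerProductSpace

open Set

variable {E : Type*} [NormedAddCommGroup E] [InnerProductSpace ℝ E] [CompleteSpace E]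

lemma myLineDeriv (f : E → ℝ) (g : E → E) (hgrad : ∀ x, HasGradientAt f (g x) x)
    (x d : E) (t : ℝ) :
    HasDerivAt (fun t : ℝ => f (x + t • d)) ⟪g (x + t • d), d⟫_ℝ t := by
  have hc : HasDerivAt (fun t : ℝ => x + t • d) d t := by
    simpa using ((hasDerivAt_id t).smul_const d).const_add x
  have hf := (hasGradientAt_iff_hasFDerivAt.mp (hgrad (x + t • d))).comp_hasDerivAt t hc
  exact hf

omit [InnerProductSpace ℝ E] [CompleteSpace E] in
lemma grad_cont (g : E → E) (L : ℝ) (hlip : ∀ x y, ‖g x - g y‖ ≤ L * ‖x - y‖) :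
    Continuous g := by
  rcases le_or_gt L 0 with h | h
  · have hc : ∀ x y, g x = g y := by
      intro x y
      have h1 := hlip x y
      have h2 : L * ‖x - y‖ ≤ 0 := mul_nonpos_of_nonpos_of_nonneg h (norm_nonneg _)
      have : ‖g x - g y‖ = 0 := le_antisymm (h1.trans h2) (norm_nonneg _)
      rwa [norm_eq_zero, sub_eq_zero] at this
    have : g = fun _ => g 0 := funext fun x => hc x 0
    rw [this]; exact continuous_const
  · exact (LipschitzWith.of_dist_le_mul (K := ⟨L, h.le⟩) (fun x y => by
      show dist (g x) (g y) ≤ L * dist x y; simpa [dist_eq_norm] using hlip x y)).continuous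

/-- First-order condition for convexity. -/
lemma first_order (f : E → ℝ) (g : E → E) (hconv : ConvexOn ℝ univ f)
    (hgrad : ∀ x, HasGradientAt f (g x) x) (x y : E) :
    f x + ⟪g x, y - x⟫_ℝ ≤ f y := by
  set d := y - x with hd
  set φ := fun t : ℝ => f (x + t • d) with hφ
  have hφconv : ConvexOn ℝ univ φ := by
    have h2 := hconv.comp_affineMap (AffineMap.lineMap x y : ℝ →ᵃ[ℝ] E)
    have he : φ = f ∘ (AffineMap.lineMap x y : ℝ →ᵃ[ℝ] E) := by
      funext t
      simp [hφ, AffineMap.lineMap_apply, hd, add_comm]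
    rw [he]
    simpa using h2
  have hder : ∀ t : ℝ, HasDerivAt φ ⟪g (x + t • d), d⟫_ℝ t := myLineDeriv f g hgrad x d
  have h01 : (0:ℝ) < 1 := one_pos
  have hslope := hφconv.deriv_le_slope (mem_univ (0:ℝ)) (mem_univ (1:ℝ)) h01
    (hder 0).differentiableAt
  rw [(hder 0).deriv] at hslope
  have hφ0 : φ 0 = f x := by simp [hφ]
  have hφ1 : φ 1 = f y := by simp [hφ, hd]
  rw [slope_def_field] at hslope
  simp only [hφ0, hφ1] at hslope
  have : ⟪g x, d⟫_ℝ ≤ f y - f x := by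
    simpa [div_one] using hslope
  linarith [this]

/-- Descent lemma. -/
lemma descent (f : E → ℝ) (g : E → E) (L : ℝ) (hL : 0 < L)
    (hgrad : ∀ x, HasGradientAt f (g x) x)
    (hlip : ∀ x y, ‖g x - g y‖ ≤ L * ‖x - y‖) (x y : E) :
    f y ≤ f x + ⟪g x, y - x⟫_ℝ + L / 2 * ‖y - x‖ ^ 2 := by
  set d := y - x with hd
  set φ := fun t : ℝ => f (x + t • d) with hφ
  set ψ := fun t : ℝ => ⟪g (x + t • d), d⟫_ℝ with hψ
  have hder : ∀ t : ℝ, HasDerivAt φ (ψ t) t := myLineDeriv f g hgrad x d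
  have hgc : Continuous g := grad_cont g L hlip
  have hψc : Continuous ψ := by
    apply Continuous.inner
    · exact hgc.comp (by continuity)
    · exact continuous_const
  have hFTC : ∫ t in (0:ℝ)..1, ψ t = φ 1 - φ 0 :=
    intervalIntegral.integral_eq_sub_of_hasDerivAt (fun t _ => hder t)
      (hψc.intervalIntegrable 0 1)
  have hbound : ∀ t ∈ Set.Icc (0:ℝ) 1, ψ t ≤ ⟪g x, d⟫_ℝ + L * ‖d‖^2 * t := by
    intro t ht
    have h1 : ψ t - ⟪g x, d⟫_ℝ = ⟪g (x + t • d) - g x, d⟫_ℝ := by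
      rw [inner_sub_left]
    have h2 : ⟪g (x + t • d) - g x, d⟫_ℝ ≤ ‖g (x + t • d) - g x‖ * ‖d‖ :=
      real_inner_le_norm _ _
    have h3 : ‖g (x + t • d) - g x‖ ≤ L * ‖t • d‖ := by
      simpa using hlip (x + t • d) x
    have h4 : ‖t • d‖ = t * ‖d‖ := by
      rw [norm_smul, Real.norm_eq_abs, abs_of_nonneg ht.1]
    have h5 := mul_le_mul_of_nonneg_right h3 (norm_nonneg d)
    rw [h4] at h5
    nlinarith [h1, h2, h5]
  have hint : ∫ t in (0:ℝ)..1, ψ t ≤ ∫ t in (0:ℝ)..1, (⟪g x, d⟫_ℝ + L * ‖d‖^2 * t) := by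
    apply intervalIntegral.integral_mono_on zero_le_one (hψc.intervalIntegrable 0 1)
    · apply Continuous.intervalIntegrable; continuity
    · exact hbound
  have hval : ∫ t in (0:ℝ)..1, (⟪g x, d⟫_ℝ + L * ‖d‖^2 * t) = ⟪g x, d⟫_ℝ + L * ‖d‖^2 / 2 := by
    have hK : IntervalIntegrable (fun t : ℝ => L * ‖d‖ ^ 2 * t) MeasureTheory.volume 0 1 := by
      apply Continuous.intervalIntegrable; continuity
    rw [intervalIntegral.integral_add intervalIntegrable_const hK,
      intervalIntegral.integral_const_mul, integral_id]
    simp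
    ring
  have hφ0 : φ 0 = f x := by simp [hφ]
  have hφ1 : φ 1 = f y := by simp [hφ, hd]
  rw [hφ0, hφ1] at hFTC
  rw [hval] at hint
  rw [hFTC] at hint
  linarith [hint]

/-- Strengthened first-order bound. -/
lemma strong_lower (f : E → ℝ) (g : E → E) (L : ℝ) (hL : 0 < L)
    (hconv : ConvexOn ℝ univ f) (hgrad : ∀ x, HasGradientAt f (g x) x)
    (hlip : ∀ x y, ‖g x - g y‖ ≤ L * ‖x - y‖) (x y : E) :
    f x + ⟪g x, y - x⟫_ℝ + 1 / (2 * L) * ‖g y - g x‖ ^ 2 ≤ f y := by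
  set w := y - (1 / L) • (g y - g x) with hw
  have h1 := first_order f g hconv hgrad x w
  have h2 := descent f g L hL hgrad hlip y w
  have hwy : w - y = -((1 / L) • (g y - g x)) := by rw [hw]; abel
  have hnwy : ‖w - y‖ ^ 2 = (1 / L) ^ 2 * ‖g y - g x‖ ^ 2 := by
    rw [hwy, norm_neg, norm_smul, mul_pow, Real.norm_eq_abs, sq_abs]
  have hiy : ⟪g y, w - y⟫_ℝ = -(1 / L) * ⟪g y, g y - g x⟫_ℝ := by
    rw [hwy, inner_neg_right, real_inner_smul_right]; ring
  have hix : ⟪g x, w - x⟫_ℝ = ⟪g x, y - x⟫_ℝ - (1 / L) * ⟪g x, g y - g x⟫_ℝ := by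
    have : w - x = (y - x) - (1 / L) • (g y - g x) := by rw [hw]; abel
    rw [this, inner_sub_right, real_inner_smul_right]
  have hsub : ⟪g y, g y - g x⟫_ℝ - ⟪g x, g y - g x⟫_ℝ = ‖g y - g x‖ ^ 2 := by
    rw [← inner_sub_left, real_inner_self_eq_norm_sq]
  rw [hix] at h1
  rw [hiy, hnwy] at h2
  have hsub' : 1/L * ⟪g y, g y - g x⟫_ℝ - 1/L * ⟪g x, g y - g x⟫_ℝ
      = 1/L * ‖g y - g x‖ ^ 2 := by rw [← mul_sub, hsub]
  have hcoef : 1/L * ‖g y - g x‖^2 - L/2 * ((1/L)^2 * ‖g y - g x‖^2)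
      = 1/(2*L) * ‖g y - g x‖^2 := by field_simp; ring
  linarith [h1, h2, hsub', hcoef]

/-- Cocoercivity (Baillon–Haddad). -/
lemma cocoercive (f : E → ℝ) (g : E → E) (L : ℝ) (hL : 0 < L)
    (hconv : ConvexOn ℝ univ f) (hgrad : ∀ x, HasGradientAt f (g x) x)
    (hlip : ∀ x y, ‖g x - g y‖ ≤ L * ‖x - y‖) (x y : E) :
    ‖g x - g y‖ ^ 2 ≤ L * ⟪g x - g y, x - y⟫_ℝ := by
  have h1 := strong_lower f g L hL hconv hgrad hlip x y
  have h2 := strong_lower f g L hL hconv hgrad hlip y x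
  have hn : ‖g x - g y‖ = ‖g y - g x‖ := by rw [← norm_neg]; congr 1; abel
  have hi : ⟪g x, y - x⟫_ℝ + ⟪g y, x - y⟫_ℝ = -⟪g x - g y, x - y⟫_ℝ := by
    rw [inner_sub_left]
    have : ⟪g x, x - y⟫_ℝ = -⟪g x, y - x⟫_ℝ := by
      rw [← inner_neg_right]; congr 1; abel
    rw [this]; ring
  have hc : 1/(2*L) * ‖g y - g x‖^2 + 1/(2*L) * ‖g x - g y‖^2
      = 1/L * ‖g x - g y‖^2 := by rw [← hn]; field_simp; ring
  have hn2 : ‖g x - g y‖^2 = ‖g y - g x‖^2 := by rw [hn]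
  have hc2 : 1/L * ‖g x - g y‖^2 = 1/L * ‖g y - g x‖^2 := by rw [hn2]
  have key : 1/L * ‖g x - g y‖ ^ 2 ≤ ⟪g x - g y, x - y⟫_ℝ := by
    linarith [h1, h2, hi, hc, hn2, hc2]
  have := mul_le_mul_of_nonneg_left key hL.le
  rw [mul_comm] at this
  calc ‖g x - g y‖ ^ 2 = L * (1/L * ‖g x - g y‖ ^ 2) := by field_simp
    _ ≤ L * ⟪g x - g y, x - y⟫_ℝ := mul_le_mul_of_nonneg_left key hL.le

lemma my_equiv_fst {α β : Type*} [AddCommGroup α] [AddCommGroup β] (x : WithLp 2 (α × β)) :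
    (WithLp.equiv 2 _ x).1 = x.fst := rfl

lemma my_equiv_snd {α β : Type*} [AddCommGroup α] [AddCommGroup β] (x : WithLp 2 (α × β)) :
    (WithLp.equiv 2 _ x).2 = x.snd := rfl

lemma my_equiv_symm_fst {α β : Type*} [AddCommGroup α] [AddCommGroup β] (x : α × β) :
    ((WithLp.equiv 2 (α × β)).symm x).fst = x.1 := rfl

lemma my_equiv_symm_snd {α β : Type*} [AddCommGroup α] [AddCommGroup β] (x : α × β) :
    ((WithLp.equiv 2 (α × β)).symm x).snd = x.2 := rfl

lemma my_prod_inner_apply {α β : Type*} [NormedAddCommGroup α] [InnerProductSpace ℝ α]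
    [NormedAddCommGroup β] [InnerProductSpace ℝ β] (x y : WithLp 2 (α × β)) :
    ⟪x, y⟫_ℝ = ⟪x.fst, y.fst⟫_ℝ + ⟪x.snd, y.snd⟫_ℝ := rfl

set_option maxHeartbeats 1000000 in
theorem pointwise_key {n m : ℕ}
    (F : EuclideanSpace ℝ (Fin n) → ℝ) (G : EuclideanSpace ℝ (Fin m) → ℝ)
    (gF : EuclideanSpace ℝ (Fin n) → EuclideanSpace ℝ (Fin n))
    (gG : EuclideanSpace ℝ (Fin m) → EuclideanSpace ℝ (Fin m))
    (A : EuclideanSpace ℝ (Fin n) →L[ℝ] EuclideanSpace ℝ (Fin m))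
    (Lf Lg L s θ η₁ η₂ : ℝ) (hLf : 0 < Lf) (hLg : 0 < Lg) (hL : L = max Lf Lg)
    (hθ : θ ≥ -1) (hη₁ : 0 < η₁) (hη₂ : 0 < η₂)
    (hη : 2 * η₂ < η₁) (hη' : η₁ < 4 - 2 * θ * η₂)
    (hs : 0 < s) (hs' : s < 2 / L)
    (hFconv : ConvexOn ℝ Set.univ F) (hGconv : ConvexOn ℝ Set.univ G)
    (hFgrad : ∀ x, HasGradientAt F (gF x) x)
    (hGgrad : ∀ y, HasGradientAt G (gG y) y)
    (hFlip : ∀ x y, ‖gF x - gF y‖ ≤ Lf * ‖x - y‖)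
    (hGlip : ∀ x y, ‖gG x - gG y‖ ≤ Lg * ‖x - y‖)
    (Q : WithLp 2 (EuclideanSpace ℝ (Fin n) × EuclideanSpace ℝ (Fin m)) →L[ℝ]
         WithLp 2 (EuclideanSpace ℝ (Fin n) × EuclideanSpace ℝ (Fin m)))
    (hQ : ∀ z, (WithLp.equiv 2 _) (Q z) =
      ((ContinuousLinearMap.adjoint A) ((WithLp.equiv 2 _) z).2, -(A ((WithLp.equiv 2 _) z).1)))
    (Iθ H M 𝓖 : WithLp 2 (EuclideanSpace ℝ (Fin n) × EuclideanSpace ℝ (Fin m)) →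
            WithLp 2 (EuclideanSpace ℝ (Fin n) × EuclideanSpace ℝ (Fin m)))
    (hIθ : ∀ z, Iθ z = (WithLp.equiv 2 _).symm (θ • ((WithLp.equiv 2 _) z).1, -((WithLp.equiv 2 _) z).2))
    (hH : ∀ z, H z = (WithLp.equiv 2 _).symm (gF ((WithLp.equiv 2 _) z).1, gG ((WithLp.equiv 2 _) z).2))
    (hM : ∀ z, M z = H z + Q z)
    (h𝓖 : ∀ z, 𝓖 z = -(M z) + (s / 2) • Q (η₁ • M z + (2 * η₂) • Iθ (M z)))
    (Zstar : WithLp 2 (EuclideanSpace ℝ (Fin n) × EuclideanSpace ℝ (Fin m)))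
    (hZstar : M Zstar = 0) :
    ∀ z, ⟪𝓖 z, z - Zstar⟫_ℝ ≤
      -(((4 - η₁ - 2 * θ * η₂) / 4) * ⟪M z, z - Zstar⟫_ℝ)
      - (s * (2 - s * L) * (η₁ - 2 * η₂) / 4) * ‖Q (z - Zstar)‖ ^ 2 := by
  intro z
  have hL' : 0 < L := by rw [hL]; exact lt_max_of_lt_left hLf
  have hsL : s * L < 2 := by
    rw [lt_div_iff₀ hL'] at hs'; linarith
  -- component equations
  have hQ1 : ∀ w, (Q w).fst = ContinuousLinearMap.adjoint A w.snd := fun w => by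
    have := congrArg Prod.fst (hQ w)
    simpa [my_equiv_fst, my_equiv_snd] using this
  have hQ2 : ∀ w, (Q w).snd = -(A w.fst) := fun w => by
    have := congrArg Prod.snd (hQ w)
    simpa [my_equiv_fst, my_equiv_snd] using this
  have hI1 : ∀ w, (Iθ w).fst = θ • w.fst := fun w => by
    rw [hIθ w, my_equiv_symm_fst, my_equiv_fst]
  have hI2 : ∀ w, (Iθ w).snd = -w.snd := fun w => by
    rw [hIθ w, my_equiv_symm_snd, my_equiv_snd]
  have hM1 : ∀ w, (M w).fst = gF w.fst + (Q w).fst := fun w => by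
    rw [hM w, WithLp.add_fst, hH w, my_equiv_symm_fst, my_equiv_fst]
  have hM2 : ∀ w, (M w).snd = gG w.snd + (Q w).snd := fun w => by
    rw [hM w, WithLp.add_snd, hH w, my_equiv_symm_snd, my_equiv_snd]
  -- skewness of Q
  have hskew : ∀ w₁ w₂, ⟪Q w₁, w₂⟫_ℝ = -⟪w₁, Q w₂⟫_ℝ := by
    intro w₁ w₂
    rw [my_prod_inner_apply, my_prod_inner_apply, hQ1, hQ2, hQ1, hQ2,
      ContinuousLinearMap.adjoint_inner_left, ContinuousLinearMap.adjoint_inner_right,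
      inner_neg_left, inner_neg_right]
    ring
  -- star equations
  have h01 : gF Zstar.fst + (Q Zstar).fst = 0 := by
    have h0 : (M Zstar).fst = 0 := by rw [hZstar, WithLp.zero_fst]
    rwa [hM1] at h0
  have h02 : gG Zstar.snd + (Q Zstar).snd = 0 := by
    have h0 : (M Zstar).snd = 0 := by rw [hZstar, WithLp.zero_snd]
    rwa [hM2] at h0
  -- components of M z
  have hMz1 : (M z).fst = (gF z.fst - gF Zstar.fst) + (Q (z - Zstar)).fst := by
    rw [hM1, map_sub, WithLp.sub_fst]
    calc gF z.fst + (Q z).fst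
        = (gF z.fst - gF Zstar.fst) + ((Q z).fst - (Q Zstar).fst)
          + (gF Zstar.fst + (Q Zstar).fst) := by abel
      _ = (gF z.fst - gF Zstar.fst) + ((Q z).fst - (Q Zstar).fst) := by
          rw [h01, add_zero]
  have hMz2 : (M z).snd = (gG z.snd - gG Zstar.snd) + (Q (z - Zstar)).snd := by
    rw [hM2, map_sub, WithLp.sub_snd]
    calc gG z.snd + (Q z).snd
        = (gG z.snd - gG Zstar.snd) + ((Q z).snd - (Q Zstar).snd)
          + (gG Zstar.snd + (Q Zstar).snd) := by abel
      _ = (gG z.snd - gG Zstar.snd) + ((Q z).snd - (Q Zstar).snd) := by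
          rw [h02, add_zero]
  -- scalar abbreviations
  have hW1 : (z - Zstar).fst = z.fst - Zstar.fst := WithLp.sub_fst z Zstar
  have hW2 : (z - Zstar).snd = z.snd - Zstar.snd := WithLp.sub_snd z Zstar
  have hu : (Q (z - Zstar)).fst
      = ContinuousLinearMap.adjoint A (z.snd - Zstar.snd) := by rw [hQ1, hW2]
  have hv : (Q (z - Zstar)).snd = -(A (z.fst - Zstar.fst)) := by rw [hQ2, hW1]
  -- Step A : ⟪M z, W⟫ = P1 + P2
  have hMW : ⟪M z, z - Zstar⟫_ℝ
      = ⟪gF z.fst - gF Zstar.fst, z.fst - Zstar.fst⟫_ℝ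
        + ⟪gG z.snd - gG Zstar.snd, z.snd - Zstar.snd⟫_ℝ := by
    rw [my_prod_inner_apply, hMz1, hMz2, inner_add_left, inner_add_left, hW1, hW2]
    have hc : ⟪(Q (z - Zstar)).fst, z.fst - Zstar.fst⟫_ℝ
        + ⟪(Q (z - Zstar)).snd, z.snd - Zstar.snd⟫_ℝ = 0 := by
      rw [hu, hv, ContinuousLinearMap.adjoint_inner_left, inner_neg_left,
        real_inner_comm]
      ring
    linear_combination hc
  -- Step C : ‖Q W‖² = nu² + nv²
  have hQWn : ‖Q (z - Zstar)‖ ^ 2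
      = ‖(Q (z - Zstar)).fst‖ ^ 2 + ‖(Q (z - Zstar)).snd‖ ^ 2 :=
    WithLp.prod_norm_sq_eq_of_L2 _
  -- Step B : expand ⟪𝓖 z, W⟫
  have hMQW : ⟪M z, Q (z - Zstar)⟫_ℝ
      = ⟪gF z.fst - gF Zstar.fst, (Q (z - Zstar)).fst⟫_ℝ + ‖(Q (z - Zstar)).fst‖ ^ 2
        + (⟪gG z.snd - gG Zstar.snd, (Q (z - Zstar)).snd⟫_ℝ + ‖(Q (z - Zstar)).snd‖ ^ 2) := by
    rw [my_prod_inner_apply, hMz1, hMz2, inner_add_left, inner_add_left,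
      real_inner_self_eq_norm_sq, real_inner_self_eq_norm_sq]
  have hIQW : ⟪Iθ (M z), Q (z - Zstar)⟫_ℝ
      = θ * (⟪gF z.fst - gF Zstar.fst, (Q (z - Zstar)).fst⟫_ℝ + ‖(Q (z - Zstar)).fst‖ ^ 2)
        - (⟪gG z.snd - gG Zstar.snd, (Q (z - Zstar)).snd⟫_ℝ + ‖(Q (z - Zstar)).snd‖ ^ 2) := by
    rw [my_prod_inner_apply, hI1, hI2, hMz1, hMz2, real_inner_smul_left, inner_neg_left,
      inner_add_left, inner_add_left, real_inner_self_eq_norm_sq, real_inner_self_eq_norm_sq]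
    ring
  have hGW : ⟪𝓖 z, z - Zstar⟫_ℝ
      = -(⟪gF z.fst - gF Zstar.fst, z.fst - Zstar.fst⟫_ℝ
          + ⟪gG z.snd - gG Zstar.snd, z.snd - Zstar.snd⟫_ℝ)
        - s / 2 * (η₁ * (⟪gF z.fst - gF Zstar.fst, (Q (z - Zstar)).fst⟫_ℝ
              + ‖(Q (z - Zstar)).fst‖ ^ 2
              + (⟪gG z.snd - gG Zstar.snd, (Q (z - Zstar)).snd⟫_ℝ
              + ‖(Q (z - Zstar)).snd‖ ^ 2))
          + 2 * η₂ * (θ * (⟪gF z.fst - gF Zstar.fst, (Q (z - Zstar)).fst⟫_ℝ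
              + ‖(Q (z - Zstar)).fst‖ ^ 2)
            - (⟪gG z.snd - gG Zstar.snd, (Q (z - Zstar)).snd⟫_ℝ
              + ‖(Q (z - Zstar)).snd‖ ^ 2))) := by
    rw [h𝓖, inner_add_left, inner_neg_left, real_inner_smul_left, hskew,
      inner_add_left, real_inner_smul_left, real_inner_smul_left, hMQW, hIQW, hMW]
    ring
  -- cocoercivity facts
  have hcF := cocoercive F gF Lf hLf hFconv hFgrad hFlip z.fst Zstar.fst
  have hcG := cocoercive G gG Lg hLg hGconv hGgrad hGlip z.snd Zstar.snd
  rw [hGW, hMW, hQWn]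
  set P1 := ⟪gF z.fst - gF Zstar.fst, z.fst - Zstar.fst⟫_ℝ with hP1def
  set P2 := ⟪gG z.snd - gG Zstar.snd, z.snd - Zstar.snd⟫_ℝ with hP2def
  set Ia := ⟪gF z.fst - gF Zstar.fst, (Q (z - Zstar)).fst⟫_ℝ with hIadef
  set Ib := ⟪gG z.snd - gG Zstar.snd, (Q (z - Zstar)).snd⟫_ℝ with hIbdef
  set na := ‖gF z.fst - gF Zstar.fst‖ with hnadef
  set nb := ‖gG z.snd - gG Zstar.snd‖ with hnbdef
  set nu := ‖(Q (z - Zstar)).fst‖ with hnudef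
  set nv := ‖(Q (z - Zstar)).snd‖ with hnvdef
  -- scalar facts
  have hP1 : na ^ 2 ≤ L * P1 := by
    have h1 : 0 ≤ P1 := (mul_nonneg_iff_of_pos_left hLf).mp (le_trans (sq_nonneg na) hcF)
    have h2 : Lf * P1 ≤ L * P1 := by
      apply mul_le_mul_of_nonneg_right _ h1
      rw [hL]; exact le_max_left _ _
    linarith
  have hP2 : nb ^ 2 ≤ L * P2 := by
    have h1 : 0 ≤ P2 := (mul_nonneg_iff_of_pos_left hLg).mp (le_trans (sq_nonneg nb) hcG)
    have h2 : Lg * P2 ≤ L * P2 := by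
      apply mul_le_mul_of_nonneg_right _ h1
      rw [hL]; exact le_max_right _ _
    linarith
  have hIa : -(na * nu) ≤ Ia := by
    have := abs_real_inner_le_norm (gF z.fst - gF Zstar.fst) ((Q (z - Zstar)).fst)
    rw [← hIadef, ← hnadef, ← hnudef] at this
    cases abs_le.mp this with
    | intro h _ => linarith
  have hIb : -(nb * nv) ≤ Ib := by
    have := abs_real_inner_le_norm (gG z.snd - gG Zstar.snd) ((Q (z - Zstar)).snd)
    rw [← hIbdef, ← hnbdef, ← hnvdef] at this
    cases abs_le.mp this with
    | intro h _ => linarith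
  -- certificate
  have hβpos : (0:ℝ) < η₁ / 2 - η₂ := by linarith
  have hαβ : (0:ℝ) ≤ (θ + 1) * η₂ := mul_nonneg (by linarith) hη₂.le
  have hαpos : (0:ℝ) ≤ η₁ / 2 + θ * η₂ := by nlinarith
  have hsL2 : (0:ℝ) < 2 - s * L := by linarith
  have c1 : (η₁/2 + θ*η₂) * na^2 ≤ (η₁/2 + θ*η₂) * (L*P1) :=
    mul_le_mul_of_nonneg_left hP1 hαpos
  have c2 : (η₁/2 - η₂) * nb^2 ≤ (η₁/2 - η₂) * (L*P2) :=
    mul_le_mul_of_nonneg_left hP2 hβpos.le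
  have c3 : (0:ℝ) ≤ ((θ+1)*η₂) * (L*P2) :=
    mul_nonneg hαβ (le_trans (sq_nonneg nb) hP2)
  have ht4 : (0:ℝ) ≤ 2*s*L*(η₁/2 + θ*η₂) := by positivity
  have ht5 : (0:ℝ) ≤ 2*s*L*(η₁/2 - η₂) := by positivity
  have c4 : (2*s*L*(η₁/2 + θ*η₂)) * (-(na * nu)) ≤ (2*s*L*(η₁/2 + θ*η₂)) * Ia :=
    mul_le_mul_of_nonneg_left hIa ht4
  have c5 : (2*s*L*(η₁/2 - η₂)) * (-(nb * nv)) ≤ (2*s*L*(η₁/2 - η₂)) * Ib :=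
    mul_le_mul_of_nonneg_left hIb ht5
  have c6 : (0:ℝ) ≤ (η₁/2 + θ*η₂) * (na - s*L*nu)^2 := mul_nonneg hαpos (sq_nonneg _)
  have c7 : (0:ℝ) ≤ (η₁/2 - η₂) * (nb - s*L*nv)^2 := mul_nonneg hβpos.le (sq_nonneg _)
  have c8 : (0:ℝ) ≤ (s*L*(2 - s*L)*((θ+1)*η₂)) * nu^2 := by positivity
  have hD : (0:ℝ) ≤ 2*L*((-(((4 - η₁ - 2*θ*η₂)/4) * (P1+P2))
      - (s*(2-s*L)*(η₁-2*η₂)/4) * (nu^2+nv^2))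
      - (-(P1+P2) - s/2*(η₁*(Ia + nu^2 + (Ib + nv^2))
          + 2*η₂*(θ*(Ia+nu^2) - (Ib+nv^2))))) := by
    linarith [c1, c2, c3, c4, c5, c6, c7, c8]
  have h2L : (0:ℝ) < 2 * L := by linarith
  have := (mul_nonneg_iff_of_pos_left h2L).mp hD
  linarith [this]


set_option maxHeartbeats 4000000 in
set_option synthInstance.maxHeartbeats 2000000 in
theorem stmt9 {n m : ℕ}
    (F : EuclideanSpace ℝ (Fin n) → ℝ) (G : EuclideanSpace ℝ (Fin m) → ℝ)
    (gF : EuclideanSpace ℝ (Fin n) → EuclideanSpace ℝ (Fin n))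
    (gG : EuclideanSpace ℝ (Fin m) → EuclideanSpace ℝ (Fin m))
    (A : EuclideanSpace ℝ (Fin n) →L[ℝ] EuclideanSpace ℝ (Fin m))
    (Lf Lg L s θ η₁ η₂ : ℝ) (hLf : 0 < Lf) (hLg : 0 < Lg) (hL : L = max Lf Lg)
    (hθ : θ ≥ -1) (hη₁ : 0 < η₁) (hη₂ : 0 < η₂)
    (hη : 2 * η₂ < η₁) (hη' : η₁ < 4 - 2 * θ * η₂)
    (hs : 0 < s) (hs' : s < 2 / L)
    (hFconv : ConvexOn ℝ Set.univ F) (hGconv : ConvexOn ℝ Set.univ G)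
    (hFgrad : ∀ x, HasGradientAt F (gF x) x)
    (hGgrad : ∀ y, HasGradientAt G (gG y) y)
    (hFlip : ∀ x y, ‖gF x - gF y‖ ≤ Lf * ‖x - y‖)
    (hGlip : ∀ x y, ‖gG x - gG y‖ ≤ Lg * ‖x - y‖)
    (Q : WithLp 2 (EuclideanSpace ℝ (Fin n) × EuclideanSpace ℝ (Fin m)) →L[ℝ]
         WithLp 2 (EuclideanSpace ℝ (Fin n) × EuclideanSpace ℝ (Fin m)))
    (hQ : ∀ z, (WithLp.equiv 2 _) (Q z) =
      ((ContinuousLinearMap.adjoint A) ((WithLp.equiv 2 _) z).2, -(A ((WithLp.equiv 2 _) z).1)))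
    (Iθ H M 𝓖 : WithLp 2 (EuclideanSpace ℝ (Fin n) × EuclideanSpace ℝ (Fin m)) →
            WithLp 2 (EuclideanSpace ℝ (Fin n) × EuclideanSpace ℝ (Fin m)))
    (hIθ : ∀ z, Iθ z = (WithLp.equiv 2 _).symm (θ • ((WithLp.equiv 2 _) z).1, -((WithLp.equiv 2 _) z).2))
    (hH : ∀ z, H z = (WithLp.equiv 2 _).symm (gF ((WithLp.equiv 2 _) z).1, gG ((WithLp.equiv 2 _) z).2))
    (hM : ∀ z, M z = H z + Q z)
    (h𝓖 : ∀ z, 𝓖 z = -(M z) + (s / 2) • Q (η₁ • M z + (2 * η₂) • Iθ (M z)))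
    (Zstar Z₀ : WithLp 2 (EuclideanSpace ℝ (Fin n) × EuclideanSpace ℝ (Fin m)))
    (hZstar : M Zstar = 0)
    (Z : ℝ → WithLp 2 (EuclideanSpace ℝ (Fin n) × EuclideanSpace ℝ (Fin m)))
    (hZ0 : Z 0 = Z₀)
    (hZ : ∀ t, HasDerivAt Z (𝓖 (Z t)) t) :
    ∀ t > (0 : ℝ),
      (1 / 2) * ‖Z t - Zstar‖ ^ 2
      + ((4 - η₁ - 2 * θ * η₂) / 4) * (∫ r in (0 : ℝ)..t, ⟪M (Z r), Z r - Zstar⟫_ℝ)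
      + (s * (2 - s * L) * (η₁ - 2 * η₂) / 4) * (∫ r in (0 : ℝ)..t, ‖Q (Z r - Zstar)‖ ^ 2)
      ≤ (1 / 2) * ‖Z₀ - Zstar‖ ^ 2 := by
  have hkey := pointwise_key F G gF gG A Lf Lg L s θ η₁ η₂ hLf hLg hL hθ hη₁ hη₂ hη hη'
    hs hs' hFconv hGconv hFgrad hGgrad hFlip hGlip Q hQ Iθ H M 𝓖 hIθ hH hM h𝓖 Zstar hZstar
  intro t ht
  -- continuity
  have hZc : Continuous Z := continuous_iff_continuousAt.mpr fun r => (hZ r).continuousAt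
  have hgFc : Continuous gF := grad_cont gF Lf hFlip
  have hgGc : Continuous gG := grad_cont gG Lg hGlip
  have hec := WithLp.prod_continuous_ofLp (p := 2) (α := (EuclideanSpace ℝ (Fin n))) (β := (EuclideanSpace ℝ (Fin m)))
  have hecs := WithLp.prod_continuous_toLp (p := 2) (α := (EuclideanSpace ℝ (Fin n))) (β := (EuclideanSpace ℝ (Fin m)))
  have hHc : Continuous H := by
    rw [funext hH]
    exact hecs.comp (((hgFc.comp (continuous_fst.comp hec)).prodMk
      (hgGc.comp (continuous_snd.comp hec))))
  have hIc : Continuous Iθ := by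
    rw [funext hIθ]
    exact hecs.comp ((((continuous_fst.comp hec).const_smul θ).prodMk
      ((continuous_snd.comp hec).neg)))
  have hMc : Continuous M := by
    rw [funext hM]; exact hHc.add Q.continuous
  have hGc : Continuous 𝓖 := by
    rw [funext h𝓖]
    exact hMc.neg.add ((Q.continuous.comp
      ((hMc.const_smul η₁).add ((hIc.comp hMc).const_smul (2 * η₂)))).const_smul (s / 2))
  -- derivative of the Lyapunov function
  have hV : ∀ r : ℝ, HasDerivAt (fun τ => (1/2 : ℝ) * ‖Z τ - Zstar‖ ^ 2)
      ⟪𝓖 (Z r), Z r - Zstar⟫_ℝ r := by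
    intro r
    have hW : HasDerivAt (fun τ => Z τ - Zstar) (𝓖 (Z r)) r := (hZ r).sub_const Zstar
    have h1 := HasDerivAt.inner ℝ hW hW
    have h2 := h1.const_mul (1/2 : ℝ)
    have he : (fun τ => (1/2 : ℝ) * ‖Z τ - Zstar‖ ^ 2)
        = fun τ => (1/2 : ℝ) * ⟪Z τ - Zstar, Z τ - Zstar⟫_ℝ := by
      funext τ; rw [real_inner_self_eq_norm_sq]
    rw [he]
    refine h2.congr_deriv ?_
    rw [real_inner_comm (Z r - Zstar) (𝓖 (Z r))]
    ring
  -- continuity of integrands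
  have hWc : Continuous fun r => Z r - Zstar := hZc.sub continuous_const
  have hc3 : Continuous fun r => ⟪𝓖 (Z r), Z r - Zstar⟫_ℝ :=
    Continuous.inner (hGc.comp hZc) hWc
  have hc1 : Continuous fun r => ⟪M (Z r), Z r - Zstar⟫_ℝ :=
    Continuous.inner (hMc.comp hZc) hWc
  have hc2 : Continuous fun r => ‖Q (Z r - Zstar)‖ ^ 2 :=
    ((Q.continuous.comp hWc).norm).pow 2
  -- FTC
  have hFTC : ∫ r in (0:ℝ)..t, ⟪𝓖 (Z r), Z r - Zstar⟫_ℝ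
      = (1/2 : ℝ) * ‖Z t - Zstar‖ ^ 2 - (1/2 : ℝ) * ‖Z 0 - Zstar‖ ^ 2 :=
    intervalIntegral.integral_eq_sub_of_hasDerivAt (fun r _ => hV r)
      (hc3.intervalIntegrable 0 t)
  -- monotonicity
  have hmono : ∫ r in (0:ℝ)..t, ⟪𝓖 (Z r), Z r - Zstar⟫_ℝ
      ≤ ∫ r in (0:ℝ)..t, (-(((4 - η₁ - 2 * θ * η₂) / 4) * ⟪M (Z r), Z r - Zstar⟫_ℝ)
          - (s * (2 - s * L) * (η₁ - 2 * η₂) / 4) * ‖Q (Z r - Zstar)‖ ^ 2) := by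
    apply intervalIntegral.integral_mono_on ht.le (hc3.intervalIntegrable 0 t)
    · exact (((continuous_const.mul hc1).neg).sub (continuous_const.mul hc2)).intervalIntegrable 0 t
    · exact fun r _ => hkey (Z r)
  have hsplit : ∫ r in (0:ℝ)..t, (-(((4 - η₁ - 2 * θ * η₂) / 4) * ⟪M (Z r), Z r - Zstar⟫_ℝ)
          - (s * (2 - s * L) * (η₁ - 2 * η₂) / 4) * ‖Q (Z r - Zstar)‖ ^ 2)
      = -(((4 - η₁ - 2 * θ * η₂) / 4) * ∫ r in (0:ℝ)..t, ⟪M (Z r), Z r - Zstar⟫_ℝ)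
        - (s * (2 - s * L) * (η₁ - 2 * η₂) / 4) * ∫ r in (0:ℝ)..t, ‖Q (Z r - Zstar)‖ ^ 2 := by
    rw [intervalIntegral.integral_sub (f := fun r => -(((4 - η₁ - 2 * θ * η₂) / 4) * ⟪M (Z r), Z r - Zstar⟫_ℝ))
      (g := fun r => (s * (2 - s * L) * (η₁ - 2 * η₂) / 4) * ‖Q (Z r - Zstar)‖ ^ 2) (((continuous_const.mul hc1).neg).intervalIntegrable 0 t)
      ((continuous_const.mul hc2).intervalIntegrable 0 t), intervalIntegral.integral_neg,
      intervalIntegral.integral_const_mul, intervalIntegral.integral_const_mul]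
  rw [hsplit] at hmono
  rw [hZ0] at hFTC
  linarith [hFTC, hmono]
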